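/- arXiv:1301.7045 — 2 statements merged into one kernel-verified Lean document; each statement's English description precedes it below -/
import Mathlib

section
/- Let F : B₁ → B₂ be a differentiable map of Banach spaces whose derivative at 0, DF|₀, is a surjective bounded linear map with bounded right-inverse P. Suppose F − DF|₀ is Lipschitz with constant 1/(2‖P‖) on the closed ball of radius δ′ centred at 0, and set δ = δ′/(2‖P‖). Then for every y ∈ B₂ with ‖y − F(0)‖ < δ there exists x ∈ B₁ with F(x) = y. -/
/-!
Since `DF ∘ P = id`, a solution of `F (P z) = y` is a fixed point of
`z ↦ z + (y - F (P z)) = y - (F - DF) (P z)`. On the ball of radius `δ' / ‖P‖` in `B₂` this map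
is `1/2`-Lipschitz and, because `‖y - F 0‖` is small, maps the ball into itself, so the Banach
fixed point theorem gives `z`, and `x = P z` solves `F x = y`.
-/

open Metric Set NNReal

theorem LipschitzOnWith.exists_fixedPoint_closedBall {α : Type*} [MetricSpace α] [CompleteSpace α]
    {f : α → α} {K : ℝ≥0} {c : α} {ρ : ℝ} (hf : LipschitzOnWith K f (closedBall c ρ))
    (hK : K < 1) (hc : dist (f c) c ≤ (1 - K) * ρ) :
    ∃ z ∈ closedBall c ρ, f z = z := by
  have hρ : 0 ≤ ρ := nonneg_of_mul_nonneg_right (dist_nonneg.trans hc) (sub_pos.2 hK)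
  have hc_mem : c ∈ closedBall c ρ := mem_closedBall_self hρ
  have hmaps : MapsTo f (closedBall c ρ) (closedBall c ρ) := fun z hz =>
    calc dist (f z) c ≤ dist (f z) (f c) + dist (f c) c := dist_triangle _ _ _
      _ ≤ K * dist z c + (1 - K) * ρ := add_le_add (hf.dist_le_mul z hz c hc_mem) hc
      _ ≤ K * ρ + (1 - K) * ρ := by gcongr; exact hz
      _ = ρ := by ring
  obtain ⟨z, hz, hfix, -⟩ := ContractingWith.exists_fixedPoint' isClosed_closedBall.isComplete
    hmaps ⟨hK, hf.mapsToRestrict hmaps⟩ hc_mem (edist_ne_top _ _)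
  exact ⟨z, hz, hfix⟩

theorem exists_eq_of_lipschitzOnWith_sub_of_rightInverse {𝕜 E F : Type*}
    [NontriviallyNormedField 𝕜] [NormedAddCommGroup E] [NormedSpace 𝕜 E]
    [NormedAddCommGroup F] [NormedSpace 𝕜 F] [CompleteSpace F]
    {f : E → F} (L : E →L[𝕜] F) (P : F →L[𝕜] E) (hP : ∀ y, L (P y) = y) {K : ℝ≥0} {r : ℝ}
    (hf : LipschitzOnWith K (fun x => f x - L x) (closedBall 0 (‖P‖ * r)))
    (hK : K * ‖P‖ < 1) {y : F} (hy : ‖y - f 0‖ ≤ (1 - K * ‖P‖) * r) :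
    ∃ x ∈ closedBall 0 (‖P‖ * r), f x = y := by
  have hPmaps : MapsTo P (closedBall 0 r) (closedBall 0 (‖P‖ * r)) := by
    simpa using P.lipschitz.mapsTo_closedBall 0 r
  have hcomp := hf.comp P.lipschitz.lipschitzOnWith hPmaps
  have hLip : LipschitzOnWith (K * ‖P‖₊) (fun z => y - (f (P z) - L (P z))) (closedBall 0 r) :=
    LipschitzOnWith.of_dist_le_mul fun a ha b hb => by
      rw [dist_sub_left]
      exact hcomp.dist_le_mul a ha b hb
  obtain ⟨z, hz, hfix⟩ := hLip.exists_fixedPoint_closedBall (by exact_mod_cast hK)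
    (by simpa [dist_eq_norm] using hy)
  refine ⟨P z, hPmaps hz, ?_⟩
  rw [hP, sub_eq_iff_eq_add, add_sub_cancel] at hfix
  exact hfix.symm

theorem stmt_1_general {B₁ B₂ : Type*} [NormedAddCommGroup B₁] [NormedSpace ℝ B₁]
    [NormedAddCommGroup B₂] [NormedSpace ℝ B₂] [CompleteSpace B₂]
    (F : B₁ → B₂) (DF : B₁ →L[ℝ] B₂)
    (P : B₂ →L[ℝ] B₁) (hP : ∀ y, DF (P y) = y)
    (δ' : ℝ)
    (hLip : LipschitzOnWith (Real.toNNReal ((2 * ‖P‖)⁻¹)) (fun x => F x - DF x)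
      (Metric.closedBall 0 δ'))
    (y : B₂) (hy : ‖y - F 0‖ < δ' / (2 * ‖P‖)) :
    ∃ x : B₁, F x = y := by
  rcases (norm_nonneg P).eq_or_lt with hP0 | hPpos
  · rw [← hP0, mul_zero, div_zero] at hy
    exact absurd hy (norm_nonneg _).not_gt
  have hK : (Real.toNNReal ((2 * ‖P‖)⁻¹) : ℝ) * ‖P‖ = 1 / 2 := by
    rw [Real.coe_toNNReal _ (by positivity)]
    field_simp
  obtain ⟨x, -, hx⟩ := exists_eq_of_lipschitzOnWith_sub_of_rightInverse DF P hP
    (r := δ' / ‖P‖) (by rwa [mul_div_cancel₀ _ hPpos.ne']) (by rw [hK]; norm_num)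
    (by rw [hK]; refine hy.le.trans_eq ?_; ring)
  exact ⟨x, hx⟩

theorem stmt_1 {B₁ B₂ : Type*} [NormedAddCommGroup B₁] [NormedSpace ℝ B₁] [CompleteSpace B₁]
    [NormedAddCommGroup B₂] [NormedSpace ℝ B₂] [CompleteSpace B₂]
    (F : B₁ → B₂) (DF : B₁ →L[ℝ] B₂) (hF : HasFDerivAt F DF 0)
    (hsurj : Function.Surjective DF)
    (P : B₂ →L[ℝ] B₁) (hP : ∀ y, DF (P y) = y)
    (δ' : ℝ) (hδ' : 0 < δ')
    (hLip : LipschitzOnWith (Real.toNNReal ((2 * ‖P‖)⁻¹)) (fun x => F x - DF x)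
      (Metric.closedBall 0 δ'))
    (y : B₂) (hy : ‖y - F 0‖ < δ' / (2 * ‖P‖)) :
    ∃ x : B₁, F x = y :=
  stmt_1_general F DF P hP δ' hLip y hy
end

section
/- Let (M, ω) be a symplectic manifold, V a vector field on M, and F : M → ℝ a smooth function with ι_V ω = −dF (so V is Hamiltonian with Hamiltonian F). Suppose ω is perturbed to ω′ = ω − (1/2) d(d^c ψ) for a smooth function ψ on M, where d^c ψ = dψ ∘ J for an almost complex structure J compatible with the setting, and suppose V is real holomorphic (L_V commutes with d^c on functions) and L_V ψ = 0. Then ι_V ω′ = −dF′ with F′ = F + (1/2) dψ(JV); that is, V is Hamiltonian for ω′ with Hamiltonian F + (1/2) dψ(JV). -/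
/-- Abstract formalization of the Hamiltonian-variation lemma: `Ω0, Ω1, Ω2` play the
roles of functions, 1-forms and 2-forms; `d0, d1` the exterior derivative, `dc` the
operator `d^c`, `ιV1, ιV2` contraction with the (real holomorphic) vector field `V`,
`ιJV` contraction of 1-forms with `JV`, and `LV0, LV1` the Lie derivative along `V`. -/
theorem stmt_12 {Ω0 Ω1 Ω2 : Type*}
    [AddCommGroup Ω0] [Module ℝ Ω0] [AddCommGroup Ω1] [Module ℝ Ω1]
    [AddCommGroup Ω2] [Module ℝ Ω2]
    (d0 : Ω0 →ₗ[ℝ] Ω1) (d1 : Ω1 →ₗ[ℝ] Ω2) (dc : Ω0 →ₗ[ℝ] Ω1)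
    (ιV1 : Ω1 →ₗ[ℝ] Ω0) (ιV2 : Ω2 →ₗ[ℝ] Ω1) (ιJV : Ω1 →ₗ[ℝ] Ω0)
    (LV0 : Ω0 →ₗ[ℝ] Ω0) (LV1 : Ω1 →ₗ[ℝ] Ω1)
    (hCartan : ∀ α : Ω1, LV1 α = ιV2 (d1 α) + d0 (ιV1 α))
    (hcomm : ∀ ψ : Ω0, LV1 (dc ψ) = dc (LV0 ψ))
    (hJ : ∀ ψ : Ω0, ιV1 (dc ψ) = -ιJV (d0 ψ))
    (ω : Ω2) (F ψ : Ω0)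
    (hHam : ιV2 ω = -d0 F)
    (hinv : LV0 ψ = 0) :
    ιV2 (ω - (1 / 2 : ℝ) • d1 (dc ψ)) = -d0 (F + (1 / 2 : ℝ) • ιJV (d0 ψ)) := by
  have h1 : ιV2 (d1 (dc ψ)) = d0 (ιJV (d0 ψ)) := by
    have h := hCartan (dc ψ)
    rw [hcomm, hinv, map_zero, hJ, map_neg] at h
    rw [← sub_eq_add_neg] at h
    exact sub_eq_zero.mp h.symm
  rw [map_sub, map_smul, hHam, h1, map_add, map_smul]
  abel
end
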